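/- Let theta in (0, pi) and define the eigenstates of the spikeless Hamiltonian in the symmetric subspace by <k|psi_t^{(n)}> = sqrt(C(n,t)/C(n,k)) * tan^{t+k}(theta/2) * cos^n(theta/2) * sum_{j=0}^{t} (-cot^2(theta/2))^j C(t,j) C(n-t, k-j). Define P_{n,k} = sqrt(C(n,k)) sin^k(theta/2) cos^{n-k}(theta/2). Then there is a nonzero constant c (independent of k) such that P_{n+1,k} <k|psi_{t+1}^{(n+1)}> = c * (P_{n,k} <k|psi_t^{(n)}> - P_{n,k-1} <k-1|psi_t^{(n)}>) for all k. -/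

import Mathlib

/-!
With `s = sin (θ/2)`, `c = cos (θ/2)` and `n = t + m`, the normalisations cancel and
`P_{n,k} ⟨k|ψ_t^(n)⟩ = √C(n,t) (s c)^t g_t(k)`, where `g_t(k)` is the coefficient of `z^k` in
`(1 - z)^t (c² + s² z)^m`. Raising `t` and `n` together keeps `m` fixed and multiplies this
generating function by `1 - z`, so `g_{t+1}(k) = g_t(k) - g_t(k-1)`; the constant is
`√(C(n+1,t+1)/C(n,t)) s c`.
-/

/-- The eigenstates of the spikeless Hamiltonian in the symmetric subspace:
⟨k|ψ_t^(n)⟩ = √(C(n,t)/C(n,k)) tan^(t+k)(θ/2) cos^n(θ/2)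
  ∑_{j=0}^t (-cot²(θ/2))^j C(t,j) C(n-t, k-j),
with the convention C(a,b) = 0 for b < 0 or b > a. -/
noncomputable def psiT (θ : ℝ) (n t k : ℕ) : ℝ :=
  Real.sqrt ((n.choose t : ℝ) / (n.choose k : ℝ)) *
    (Real.tan (θ/2))^(t + k) * (Real.cos (θ/2))^n *
    ∑ j ∈ Finset.range (t + 1),
      (-(Real.cos (θ/2) / Real.sin (θ/2))^2)^j * (t.choose j : ℝ) *
        (if j ≤ k then ((n - t).choose (k - j) : ℝ) else 0)

/-- P_{n,k} = √C(n,k) sin^k(θ/2) cos^(n-k)(θ/2). -/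
noncomputable def Pcoef (θ : ℝ) (n k : ℕ) : ℝ :=
  Real.sqrt (n.choose k) * (Real.sin (θ/2))^k * (Real.cos (θ/2))^(n - k)

open Finset Real

section BackwardDifference

variable {R : Type*} [CommRing R]

/-- The `k`-th coefficient of `(1 - z)^t ∑ᵢ f i zⁱ`, i.e. the `t`-fold backward difference of `f`
extended by zero to negative indices. -/
def iterBackwardDiff (t : ℕ) (f : ℕ → R) (k : ℕ) : R :=
  ∑ j ∈ range (t + 1), (-1) ^ j * (t.choose j : R) * if j ≤ k then f (k - j) else 0

lemma sum_range_alternating_choose_succ (t : ℕ) (g : ℕ → R) :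
    ∑ j ∈ range (t + 2), (-1) ^ j * ((t + 1).choose j : R) * g j =
      ∑ j ∈ range (t + 1), (-1) ^ j * (t.choose j : R) * g j -
        ∑ j ∈ range (t + 1), (-1) ^ j * (t.choose j : R) * g (j + 1) := by
  have pascal : ∀ i, (-1) ^ (i + 1) * ((t + 1).choose (i + 1) : R) * g (i + 1) =
      (-1) ^ (i + 1) * (t.choose (i + 1) : R) * g (i + 1) -
        (-1) ^ i * (t.choose i : R) * g (i + 1) := by
    intro i
    rw [Nat.choose_succ_succ', Nat.cast_add]
    ring
  have top_vanishes : ∑ j ∈ range (t + 2), (-1) ^ j * (t.choose j : R) * g j =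
      ∑ j ∈ range (t + 1), (-1) ^ j * (t.choose j : R) * g j := by
    simp [sum_range_succ _ (t + 1)]
  rw [← top_vanishes, sum_range_succ' _ (t + 1), sum_range_succ' _ (t + 1)]
  simp only [pascal, sum_sub_distrib, Nat.choose_zero_right]
  ring

lemma iterBackwardDiff_zero_right (t : ℕ) (f : ℕ → R) : iterBackwardDiff t f 0 = f 0 := by
  simp [iterBackwardDiff]

lemma iterBackwardDiff_succ_succ (t : ℕ) (f : ℕ → R) (k : ℕ) :
    iterBackwardDiff (t + 1) f (k + 1) =
      iterBackwardDiff t f (k + 1) - iterBackwardDiff t f k := by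
  simp only [iterBackwardDiff, sum_range_alternating_choose_succ, add_le_add_iff_right,
    Nat.add_sub_add_right]

lemma iterBackwardDiff_eq_zero_of_lt {t m k : ℕ} {f : ℕ → R} (hf : ∀ i, m < i → f i = 0)
    (hk : t + m < k) : iterBackwardDiff t f k = 0 := by
  refine sum_eq_zero fun j hj ↦ ?_
  have hjt : j ≤ t := Nat.lt_succ_iff.mp (mem_range.mp hj)
  rw [if_pos (by omega), hf _ (by omega), mul_zero]

end BackwardDifference

lemma monomial_mul_psiT_term_eq {s c : ℝ} (hs : s ≠ 0) (hc : c ≠ 0) {t m k j : ℕ} (hjt : j ≤ t)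
    (hjk : j ≤ k) (hkm : k - j ≤ m) :
    s ^ k * c ^ (t + m - k) * ((s / c) ^ (t + k) * c ^ (t + m) * (-(c / s) ^ 2) ^ j) =
      (s * c) ^ t * ((-1) ^ j * ((s ^ 2) ^ (k - j) * (c ^ 2) ^ (m - (k - j)))) := by
  obtain ⟨u, rfl⟩ := Nat.exists_eq_add_of_le hjt
  obtain ⟨a, rfl⟩ := Nat.exists_eq_add_of_le hjk
  obtain ⟨b, rfl⟩ := Nat.exists_eq_add_of_le (show a ≤ m by omega)
  rw [show j + u + (a + b) - (j + a) = u + b by omega, Nat.add_sub_cancel_left,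
    Nat.add_sub_cancel_left, neg_pow]
  simp only [div_pow, ← pow_mul, mul_pow]
  field_simp
  ring

lemma Pcoef_mul_psiT (θ : ℝ) (hs : sin (θ / 2) ≠ 0) (hc : cos (θ / 2) ≠ 0) (t m k : ℕ) :
    Pcoef θ (t + m) k * psiT θ (t + m) t k =
      √((t + m).choose t) * (sin (θ / 2) * cos (θ / 2)) ^ t *
        iterBackwardDiff t
          (fun i ↦ (m.choose i : ℝ) * (sin (θ / 2) ^ 2) ^ i * (cos (θ / 2) ^ 2) ^ (m - i)) k := by
  rcases le_or_gt k (t + m) with hk | hk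
  swap
  · rw [Pcoef, Nat.choose_eq_zero_of_lt hk, iterBackwardDiff_eq_zero_of_lt _ hk]
    · simp
    · intro i hi
      simp [Nat.choose_eq_zero_of_lt hi]
  have hCk : (0 : ℝ) < (t + m).choose k := by exact_mod_cast Nat.choose_pos hk
  have hsqrt : √((t + m).choose k) * √((t + m).choose t / (t + m).choose k) =
      √((t + m).choose t) := by
    rw [← sqrt_mul hCk.le, mul_div_cancel₀ _ hCk.ne']
  rw [Pcoef, psiT, tan_eq_sin_div_cos, iterBackwardDiff, ← hsqrt, mul_sum, mul_sum, mul_sum]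
  generalize √((t + m).choose k) = A, √(((t + m).choose t : ℝ) / (t + m).choose k) = B
  refine sum_congr rfl fun j hj ↦ ?_
  have hjt : j ≤ t := Nat.lt_succ_iff.mp (mem_range.mp hj)
  by_cases hjk : j ≤ k
  swap
  · simp [hjk]
  by_cases hkm : k - j ≤ m
  swap
  · simp [Nat.choose_eq_zero_of_lt (not_le.mp hkm)]
  simp only [if_pos hjk, Nat.add_sub_cancel_left]
  linear_combination
    (A * B * t.choose j * m.choose (k - j)) * monomial_mul_psiT_term_eq hs hc hjt hjk hkm

theorem psiT_recurrence_general (θ : ℝ) (hθ0 : 0 < θ) (hθπ : θ < Real.pi)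
    (n t : ℕ) (htn : t ≤ n) :
    ∃ c : ℝ, c ≠ 0 ∧
      Pcoef θ (n + 1) 0 * psiT θ (n + 1) (t + 1) 0 = c * (Pcoef θ n 0 * psiT θ n t 0) ∧
      ∀ k : ℕ, 1 ≤ k →
        Pcoef θ (n + 1) k * psiT θ (n + 1) (t + 1) k
          = c * (Pcoef θ n k * psiT θ n t k - Pcoef θ n (k - 1) * psiT θ n t (k - 1)) := by
  have hs : 0 < sin (θ / 2) := sin_pos_of_pos_of_lt_pi (by linarith) (by linarith)
  have hc : 0 < cos (θ / 2) := cos_pos_of_mem_Ioo ⟨by linarith [pi_pos], by linarith⟩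
  have factor := Pcoef_mul_psiT θ hs.ne' hc.ne'
  obtain ⟨m, rfl⟩ := Nat.exists_eq_add_of_le htn
  have hC : (0 : ℝ) < (t + m).choose t := by exact_mod_cast Nat.choose_pos htn
  have hC' : (0 : ℝ) < (t + 1 + m).choose (t + 1) := by exact_mod_cast Nat.choose_pos (by omega)
  have hsqrt : √((t + 1 + m).choose (t + 1)) =
      √(((t + 1 + m).choose (t + 1) : ℝ) / (t + m).choose t) * √((t + m).choose t) := by
    rw [← sqrt_mul (div_pos hC' hC).le, div_mul_cancel₀ _ hC.ne']
  refine ⟨√(((t + 1 + m).choose (t + 1) : ℝ) / (t + m).choose t) * (sin (θ / 2) * cos (θ / 2)),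
    by positivity, ?_, ?_⟩
  · rw [add_right_comm, factor, factor, iterBackwardDiff_zero_right, iterBackwardDiff_zero_right,
      hsqrt]
    ring
  · rintro (_ | k) hk
    · omega
    rw [add_right_comm, factor, factor, factor, Nat.add_sub_cancel, iterBackwardDiff_succ_succ,
      hsqrt]
    ring

/-- Recurrence relating consecutive excited states of the spikeless
Hamiltonian: P_{n+1,k}⟨k|ψ_{t+1}^(n+1)⟩ is proportional (with a nonzero
constant independent of k) to P_{n,k}⟨k|ψ_t^(n)⟩ - P_{n,k-1}⟨k-1|ψ_t^(n)⟩
(with the k = 0 case having no second term). -/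
theorem psiT_recurrence (θ : ℝ) (hθ0 : 0 < θ) (hθπ : θ < Real.pi)
    (n t : ℕ) (hn : 1 ≤ n) (htn : t ≤ n) :
    ∃ c : ℝ, c ≠ 0 ∧
      Pcoef θ (n + 1) 0 * psiT θ (n + 1) (t + 1) 0 = c * (Pcoef θ n 0 * psiT θ n t 0) ∧
      ∀ k : ℕ, 1 ≤ k →
        Pcoef θ (n + 1) k * psiT θ (n + 1) (t + 1) k
          = c * (Pcoef θ n k * psiT θ n t k - Pcoef θ n (k - 1) * psiT θ n t (k - 1)) :=
  psiT_recurrence_general θ hθ0 hθπ n t htn
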